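/- arXiv:2205.04242 — 3 statements merged into one kernel-verified Lean document; each statement's English description precedes it below -/
import Mathlib

section
/- For all real x with -1 ≤ x < 1, the series ∑_{n=1}^∞ (C(2n,n)/(n·4^n))·xⁿ converges and equals 2·log(2/(1+√(1-x))), where C(2n,n) is the central binomial coefficient. -/
/-!
With `c n = C(2n,n) / 4^n` one has `n! * c n = (1/2)(3/2)⋯(n - 1/2)`, i.e. `c n` is the binomial
coefficient `choose (n - 1/2) n`, so the binomial series gives `∑ c n * x^n = (1 - x)^(-1/2)`.
Dropping `c 0` and dividing by `x` gives `∑ c (n+1) * x^n = 1 / (√(1-x) (1 + √(1-x)))`, which is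
the derivative of `2 log (2 / (1 + √(1-x)))`; as both sides vanish at `0`, the termwise
primitive of this series equals the logarithm on `(-1, 1)`. Finally `c n ≤ (n+1)^(-1/2)`, so
`∑ c n / n` converges absolutely, the series converges uniformly on `[-1, 1]`, and the identity
extends to `x = -1` by continuity.
-/

open Real Set Nat

noncomputable def primitiveSeries (a : ℕ → ℝ) (y : ℝ) : ℝ := ∑' n, a n / (n + 1) * y ^ (n + 1)

lemma primitiveSeries_zero (a : ℕ → ℝ) : primitiveSeries a 0 = 0 := by
  simp [primitiveSeries]

section PrimitiveSeries

variable {a : ℕ → ℝ}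

lemma hasDerivAt_primitiveSeries {C : ℝ} (ha : ∀ n, |a n| ≤ C) {x : ℝ}
    (hx : |x| < 1) : HasDerivAt (primitiveSeries a) (∑' n, a n * x ^ n) x := by
  obtain ⟨r, hxr, hr1⟩ := exists_between hx
  have hr0 : 0 < r := (abs_nonneg x).trans_lt hxr
  unfold primitiveSeries
  refine hasDerivAt_tsum_of_isPreconnected (g' := fun n y => a n * y ^ n)
    ((summable_geometric_of_lt_one hr0.le hr1).mul_left C) Metric.isOpen_ball
    (convex_ball (0 : ℝ) r).isPreconnected (fun n y _ => ?_) (fun n y hy => ?_)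
    (Metric.mem_ball_self hr0) ?_ (mem_ball_zero_iff.2 hxr)
  · refine ((hasDerivAt_pow (n + 1) y).const_mul (a n / (n + 1))).congr_deriv ?_
    push_cast
    field_simp
  · rw [norm_mul, norm_pow]
    exact mul_le_mul (ha n) (pow_le_pow_left₀ (norm_nonneg y) (mem_ball_zero_iff.1 hy).le n)
      (by positivity) ((abs_nonneg _).trans (ha n))
  · simp

lemma norm_div_succ_mul_pow_succ_le {y : ℝ} (hy : y ∈ Icc (-1) 1) (n : ℕ) :
    ‖a n / (n + 1) * y ^ (n + 1)‖ ≤ |a n / (n + 1)| := by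
  rw [norm_mul, norm_pow, Real.norm_eq_abs]
  exact mul_le_of_le_one_right (abs_nonneg _) (pow_le_one₀ (norm_nonneg y) (abs_le.2 hy))

lemma continuousOn_primitiveSeries (ha : Summable fun n => a n / (n + 1)) :
    ContinuousOn (primitiveSeries a) (Icc (-1) 1) :=
  continuousOn_tsum (fun _ => (continuous_const.mul (continuous_pow _)).continuousOn) ha.abs
    fun n _ hy => norm_div_succ_mul_pow_succ_le hy n

lemma summable_div_succ_mul_pow_succ (ha : Summable fun n => a n / (n + 1)) {y : ℝ}
    (hy : y ∈ Icc (-1) 1) : Summable fun n => a n / (n + 1) * y ^ (n + 1) :=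
  .of_norm_bounded ha.abs (norm_div_succ_mul_pow_succ_le hy)

end PrimitiveSeries

noncomputable def centralBinomRatio (n : ℕ) : ℝ := n.centralBinom / 4 ^ n

@[simp]
lemma centralBinomRatio_zero : centralBinomRatio 0 = 1 := by
  simp [centralBinomRatio]

lemma centralBinomRatio_succ (n : ℕ) :
    centralBinomRatio (n + 1) = centralBinomRatio n * ((1 / 2 + n) / (n + 1)) := by
  have h : ((n : ℝ) + 1) * (n + 1).centralBinom = 2 * (2 * n + 1) * n.centralBinom := by
    exact_mod_cast n.succ_mul_centralBinom_succ
  simp only [centralBinomRatio, pow_succ]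
  field_simp
  linear_combination 2 * h

lemma factorial_mul_centralBinomRatio (n : ℕ) :
    n ! * centralBinomRatio n = (ascPochhammer ℝ n).eval (1 / 2) := by
  induction n with
  | zero => simp
  | succ n ih =>
    rw [ascPochhammer_succ_eval, ← ih, centralBinomRatio_succ, Nat.factorial_succ]
    push_cast
    field_simp

lemma ring_choose_half_add_sub_one (n : ℕ) :
    Ring.choose ((1 / 2 : ℝ) + n - 1) n = centralBinomRatio n := by
  rw [← Ring.multichoose_eq, ← mul_right_inj' (by positivity : (n ! : ℝ) ≠ 0),
    factorial_mul_centralBinomRatio, ← nsmul_eq_mul,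
    Ring.factorial_nsmul_multichoose_eq_ascPochhammer, Polynomial.ascPochhammer_smeval_eq_eval]

lemma hasSum_centralBinomRatio_mul_pow {x : ℝ} (hx : |x| < 1) :
    HasSum (fun n => centralBinomRatio n * x ^ n) (1 / √(1 - x)) := by
  have h := (Real.one_div_one_sub_rpow_hasFPowerSeriesOnBall_zero (1 / 2)).hasSum
    (y := x) (by simpa [edist_zero_right, enorm_eq_nnnorm, ← NNReal.coe_lt_one] using hx)
  simp only [FormalMultilinearSeries.ofScalars_apply_eq, zero_add, smul_eq_mul,
    ring_choose_half_add_sub_one, ← Real.sqrt_eq_rpow] at h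
  simpa only [mul_comm] using h

lemma centralBinomRatio_nonneg (n : ℕ) : 0 ≤ centralBinomRatio n := by
  unfold centralBinomRatio; positivity

lemma centralBinomRatio_le_one (n : ℕ) : centralBinomRatio n ≤ 1 :=
  div_le_one_of_le₀ (by exact_mod_cast n.centralBinom_le_four_pow) (by positivity)

lemma centralBinomRatio_sq_mul_le_one (n : ℕ) : centralBinomRatio n ^ 2 * (n + 1) ≤ 1 := by
  induction n with
  | zero => simp
  | succ n ih =>
    have hq : (1 / 2 + n : ℝ) ^ 2 * (n + 2) / (n + 1) ^ 3 ≤ 1 := by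
      rw [div_le_one (by positivity)]; nlinarith
    calc centralBinomRatio (n + 1) ^ 2 * (↑(n + 1) + 1)
        = centralBinomRatio n ^ 2 * (n + 1) * ((1 / 2 + n) ^ 2 * (n + 2) / (n + 1) ^ 3) := by
          rw [centralBinomRatio_succ]; push_cast; field_simp; ring
      _ ≤ 1 * 1 := mul_le_mul ih hq (by positivity) zero_le_one
      _ = 1 := one_mul 1

lemma centralBinomRatio_le_rpow (n : ℕ) : centralBinomRatio n ≤ ((n : ℝ) + 1) ^ (-1 / 2 : ℝ) := by
  have hn : (0 : ℝ) < n + 1 := by positivity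
  rw [show (-1 / 2 : ℝ) = -(1 / 2) by ring, rpow_neg hn.le, ← sqrt_eq_rpow, ← one_div,
    le_div_iff₀ (sqrt_pos.2 hn)]
  refine (pow_le_one_iff_of_nonneg (by positivity [centralBinomRatio_nonneg n]) two_ne_zero).1 ?_
  rw [mul_pow, sq_sqrt hn.le]
  exact centralBinomRatio_sq_mul_le_one n

lemma summable_centralBinomRatio_succ_div :
    Summable fun n : ℕ => centralBinomRatio (n + 1) / (n + 1) := by
  have h : Summable fun n : ℕ => ((n : ℝ) + 1) ^ (-3 / 2 : ℝ) := by
    simpa using (summable_nat_add_iff 1).2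
      (Real.summable_nat_rpow.2 (by norm_num : (-3 / 2 : ℝ) < -1))
  refine h.of_nonneg_of_le (fun n => by have := centralBinomRatio_nonneg (n + 1); positivity)
    fun n => ?_
  have hn : (0 : ℝ) < n + 1 := by positivity
  calc centralBinomRatio (n + 1) / (n + 1) ≤ ((n : ℝ) + 1) ^ (-1 / 2 : ℝ) / (n + 1) := by
        refine div_le_div_of_nonneg_right ((centralBinomRatio_le_rpow (n + 1)).trans ?_) hn.le
        exact rpow_le_rpow_of_nonpos hn (by push_cast; linarith) (by norm_num)
    _ = ((n : ℝ) + 1) ^ (-3 / 2 : ℝ) := by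
        rw [div_eq_mul_inv, ← rpow_neg_one, ← rpow_add hn]; norm_num

lemma hasSum_centralBinomRatio_succ_mul_pow {x : ℝ} (hx : |x| < 1) :
    HasSum (fun n => centralBinomRatio (n + 1) * x ^ n) (1 / (√(1 - x) * (1 + √(1 - x)))) := by
  rcases eq_or_ne x 0 with rfl | hx0
  · convert hasSum_single (f := fun n => centralBinomRatio (n + 1) * (0 : ℝ) ^ n) 0
      (fun n hn => by simp [hn]) using 1
    norm_num [centralBinomRatio, centralBinom]
  · have h1x : 0 < 1 - x := by linarith [le_abs_self x]
    have hs : √(1 - x) ^ 2 = 1 - x := sq_sqrt h1x.le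
    have h := ((hasSum_nat_add_iff' 1).2 (hasSum_centralBinomRatio_mul_pow hx)).div_const x
    have hterm : (fun n => centralBinomRatio (n + 1) * x ^ (n + 1) / x)
        = fun n => centralBinomRatio (n + 1) * x ^ n := by
      ext n; field_simp; ring
    have hval : (1 / √(1 - x) - centralBinomRatio 0 * x ^ 0) / x
        = 1 / (√(1 - x) * (1 + √(1 - x))) := by
      rw [centralBinomRatio_zero, pow_zero, mul_one, div_eq_iff hx0]
      field_simp
      linear_combination -hs
    rwa [hterm, Finset.sum_range_one, hval] at h

lemma hasDerivAt_two_mul_log_two_div_one_add_sqrt {x : ℝ} (hx : x < 1) :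
    HasDerivAt (fun y => 2 * log (2 / (1 + √(1 - y)))) (1 / (√(1 - x) * (1 + √(1 - x)))) x := by
  have h1x : 0 < 1 - x := by linarith
  have hs : 0 < √(1 - x) := sqrt_pos.2 h1x
  have hu := (((hasDerivAt_id' x).const_sub 1).sqrt h1x.ne').const_add 1
  have hv := (hasDerivAt_const x (2 : ℝ)).fun_div hu (by positivity)
  refine ((hv.log (by positivity)).const_mul 2).congr_deriv ?_
  field_simp
  ring

lemma continuous_two_mul_log_two_div_one_add_sqrt :
    Continuous fun y : ℝ => 2 * log (2 / (1 + √(1 - y))) := by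
  have hpos (y : ℝ) : 0 < 1 + √(1 - y) := by positivity
  exact continuous_const.mul ((continuous_const.div (by fun_prop) fun y => (hpos y).ne').log
    fun y => (div_pos two_pos (hpos y)).ne')

lemma primitiveSeries_centralBinomRatio_succ_eqOn :
    EqOn (primitiveSeries fun n => centralBinomRatio (n + 1))
      (fun y => 2 * log (2 / (1 + √(1 - y)))) (Icc (-1) 1) := by
  have hF {y : ℝ} (hy : y ∈ Ioo (-1) 1) := hasDerivAt_primitiveSeries
    (fun n => (abs_of_nonneg (centralBinomRatio_nonneg (n + 1))).trans_le
      (centralBinomRatio_le_one (n + 1))) (abs_lt.2 hy)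
  have hg {y : ℝ} (hy : y ∈ Ioo (-1) 1) := hasDerivAt_two_mul_log_two_div_one_add_sqrt hy.2
  have hIoo : EqOn (primitiveSeries fun n => centralBinomRatio (n + 1))
      (fun y => 2 * log (2 / (1 + √(1 - y)))) (Ioo (-1) 1) :=
    isOpen_Ioo.eqOn_of_deriv_eq isPreconnected_Ioo
      (fun y hy => (hF hy).differentiableAt.differentiableWithinAt)
      (fun y hy => (hg hy).differentiableAt.differentiableWithinAt)
      (fun y hy => by
        rw [(hF hy).deriv, (hg hy).deriv,
          (hasSum_centralBinomRatio_succ_mul_pow (abs_lt.2 hy)).tsum_eq])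
      (show (0 : ℝ) ∈ Ioo (-1) 1 by norm_num) (by norm_num [primitiveSeries_zero])
  exact hIoo.of_subset_closure (continuousOn_primitiveSeries summable_centralBinomRatio_succ_div)
    continuous_two_mul_log_two_div_one_add_sqrt.continuousOn Ioo_subset_Icc_self
    (by rw [closure_Ioo (by norm_num)])

theorem central_binom_gf (x : ℝ) (hx : -1 ≤ x) (hx' : x < 1) :
    HasSum (fun n : ℕ =>
      ((Nat.choose (2 * (n + 1)) (n + 1) : ℝ) / ((n + 1) * 4 ^ (n + 1))) * x ^ (n + 1))
      (2 * Real.log (2 / (1 + Real.sqrt (1 - x)))) := by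
  have hxI : x ∈ Icc (-1) 1 := ⟨hx, hx'.le⟩
  have hterm (n : ℕ) : ((Nat.choose (2 * (n + 1)) (n + 1) : ℝ) / ((n + 1) * 4 ^ (n + 1)))
      = centralBinomRatio (n + 1) / (n + 1) := by
    rw [centralBinomRatio, Nat.centralBinom_eq_two_mul_choose, div_div, mul_comm]
    ring
  simp only [hterm]
  convert (summable_div_succ_mul_pow_succ summable_centralBinomRatio_succ_div hxI).hasSum
  exact (primitiveSeries_centralBinomRatio_succ_eqOn hxI).symm
end

section
/- The series ∑_{n=1}^∞ C(2n,n)/(n·4^n) converges to 2·log 2. -/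
/-!
Write `bₙ = C(2n,n) / 4ⁿ`, which is the binomial coefficient `(n - 1/2 choose n)`, so the binomial
series gives `∑ bₙ xⁿ = 1 / √(1 - x)` for `|x| < 1`. Removing the constant term and dividing by `x`,
`∑ bₙ₊₁ xⁿ = 1 / (√(1 - x) (1 + √(1 - x)))`, which is the derivative of
`2 log 2 - 2 log (1 + √(1 - x))`; integrating term by term gives
`∑ bₙ₊₁ / (n + 1) · xⁿ⁺¹ = 2 log 2 - 2 log (1 + √(1 - x))` on `(0, 1)`. The coefficients are
nonnegative, so letting `x → 1⁻` yields both the convergence of the series at `x = 1` and its value.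
-/

open Filter Topology Set Real

lemma hasSum_of_tendsto_tsum_powerSeries_nhdsLT {a : ℕ → ℝ} {l : ℝ} (ha : ∀ n, 0 ≤ a n)
    (hsum : ∀ x ∈ Ioo (0 : ℝ) 1, Summable fun n => a n * x ^ n)
    (h : Tendsto (fun x => ∑' n, a n * x ^ n) (𝓝[<] 1) (𝓝 l)) : HasSum a l := by
  have hpartial (N : ℕ) : ∑ n ∈ Finset.range N, a n ≤ l := by
    have hcont : Continuous fun x : ℝ => ∑ n ∈ Finset.range N, a n * x ^ n := by fun_prop
    have hpoly : Tendsto (fun x : ℝ => ∑ n ∈ Finset.range N, a n * x ^ n) (𝓝[<] 1)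
        (𝓝 (∑ n ∈ Finset.range N, a n)) := by
      simpa using (hcont.tendsto 1).mono_left nhdsWithin_le_nhds
    refine le_of_tendsto_of_tendsto hpoly h ?_
    filter_upwards [Ioo_mem_nhdsLT zero_lt_one] with x hx
    exact (hsum x hx).sum_le_tsum _ fun n _ => mul_nonneg (ha n) (pow_nonneg hx.1.le n)
  have hs : Summable a := summable_of_sum_range_le ha hpartial
  have habel := Real.tendsto_tsum_powerSeries_nhdsWithin_lt hs.hasSum.tendsto_sum_nat
  exact tendsto_nhds_unique habel h ▸ hs.hasSum

lemma hasDerivAt_tsum_div_succ_mul_pow_succ {c : ℕ → ℝ} {M : ℝ} (hc : ∀ n, |c n| ≤ M)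
    {x : ℝ} (hx : |x| < 1) :
    HasDerivAt (fun y => ∑' n : ℕ, c n / (n + 1) * y ^ (n + 1)) (∑' n, c n * x ^ n) x := by
  obtain ⟨r, hxr, hr1⟩ := exists_between hx
  have hr0 : 0 < r := (abs_nonneg x).trans_lt hxr
  refine hasDerivAt_tsum_of_isPreconnected (g := fun n y => c n / (n + 1) * y ^ (n + 1))
    (g' := fun n y => c n * y ^ n) (u := fun n => M * r ^ n) (y₀ := 0)
    ((summable_geometric_of_lt_one hr0.le hr1).mul_left M) isOpen_Ioo
    (convex_Ioo (-r) r).isPreconnected (fun n y _ => ?_) (fun n y hy => ?_)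
    ⟨neg_lt_zero.2 hr0, hr0⟩ (by simp) (abs_lt.1 hxr)
  · refine ((hasDerivAt_pow (n + 1) y).const_mul _).congr_deriv ?_
    push_cast
    field_simp
  · rw [norm_mul, norm_pow]
    exact mul_le_mul (hc n) (pow_le_pow_left₀ (norm_nonneg y) (abs_lt.2 hy).le n)
      (by positivity) ((abs_nonneg _).trans (hc n))

lemma ring_choose_natCast_sub_half (n : ℕ) :
    Ring.choose ((n : ℝ) - 1 / 2) n = Nat.centralBinom n / 4 ^ n := by
  induction n with
  | zero => simp
  | succ n ih =>
    have hlast : Ring.choose ((n : ℝ) - 1 / 2) (n + 1)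
        = -(Nat.centralBinom n / 4 ^ n) / (2 * (n + 1)) := by
      have h := Ring.choose_smul_choose ((n : ℝ) - 1 / 2) (Nat.le_succ n)
      simp only [Nat.succ_eq_add_one, Nat.add_sub_cancel_left] at h
      rw [Nat.choose_succ_self_right, sub_sub_cancel_left, Ring.choose_one_right, ih,
        nsmul_eq_mul, Nat.cast_succ] at h
      rw [eq_div_iff (by positivity)]
      linear_combination 2 * h
    have hrec : (Nat.centralBinom (n + 1) : ℝ)
        = 2 * (2 * n + 1) * Nat.centralBinom n / (n + 1) := by
      rw [eq_div_iff (by positivity), mul_comm]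
      exact_mod_cast Nat.succ_mul_centralBinom_succ n
    rw [show ((n + 1 : ℕ) : ℝ) - 1 / 2 = (n : ℝ) - 1 / 2 + 1 by push_cast; ring,
      Ring.choose_succ_succ, ih, hlast, hrec]
    field_simp
    ring

lemma centralBinom_div_four_pow_le_one (n : ℕ) : (Nat.centralBinom n : ℝ) / 4 ^ n ≤ 1 :=
  div_le_one_of_le₀ (by exact_mod_cast Nat.centralBinom_le_four_pow n) (by positivity)

lemma hasSum_centralBinom_div_four_pow_mul_pow {x : ℝ} (hx : |x| < 1) :
    HasSum (fun n => (Nat.centralBinom n : ℝ) / 4 ^ n * x ^ n) (1 / √(1 - x)) := by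
  have h := (Real.one_div_one_sub_rpow_hasFPowerSeriesOnBall_zero (1 / 2)).hasSum (y := x)
    (by simpa [edist_dist] using hx)
  simp only [FormalMultilinearSeries.ofScalars_apply_eq, zero_add, smul_eq_mul] at h
  rw [Real.sqrt_eq_rpow]
  convert! h using 3 with n
  rw [← ring_choose_natCast_sub_half]
  ring_nf

lemma tsum_centralBinom_succ_div_four_pow_mul_pow {x : ℝ} (hx : |x| < 1) (hx0 : x ≠ 0) :
    ∑' n : ℕ, (Nat.centralBinom (n + 1) : ℝ) / 4 ^ (n + 1) * x ^ n
      = 1 / (√(1 - x) * (1 + √(1 - x))) := by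
  have h : HasSum (fun n : ℕ => (Nat.centralBinom (n + 1) : ℝ) / 4 ^ (n + 1) * x ^ n)
      ((1 / √(1 - x) - 1) / x) := by
    convert! ((hasSum_nat_add_iff' 1).2 (hasSum_centralBinom_div_four_pow_mul_pow hx)).div_const x
      using 1
    · ext n
      field_simp
      ring
    · rw [Finset.sum_range_one]
      simp
  have hs : 0 < √(1 - x) := sqrt_pos.2 (by linarith [le_abs_self x])
  have hsq : √(1 - x) ^ 2 = 1 - x := sq_sqrt (by linarith [le_abs_self x])
  rw [h.tsum_eq]
  field_simp
  linear_combination -hsq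

lemma hasDerivAt_two_log_two_sub_two_log_one_add_sqrt_one_sub {y : ℝ} (hy : y < 1) :
    HasDerivAt (fun y => 2 * log 2 - 2 * log (1 + √(1 - y)))
      (1 / (√(1 - y) * (1 + √(1 - y)))) y := by
  have hs : 0 < √(1 - y) := sqrt_pos.2 (by linarith)
  have h := (((hasDerivAt_id' y).const_sub 1).sqrt (by simp; linarith)).const_add 1
    |>.log (by positivity) |>.const_mul 2 |>.const_sub (2 * log 2)
  refine h.congr_deriv ?_
  field_simp

lemma tsum_centralBinom_succ_div_four_pow_div_succ_mul_pow_succ {x : ℝ} (hx0 : 0 < x)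
    (hx1 : x < 1) :
    ∑' n : ℕ, (Nat.centralBinom (n + 1) : ℝ) / 4 ^ (n + 1) / (n + 1) * x ^ (n + 1)
      = 2 * log 2 - 2 * log (1 + √(1 - x)) := by
  set ρ : ℝ → ℝ := fun y => ∑' n : ℕ, (Nat.centralBinom (n + 1) : ℝ) / 4 ^ (n + 1) / (n + 1) *
    y ^ (n + 1) - (2 * log 2 - 2 * log (1 + √(1 - y)))
  have hbound (n : ℕ) : |(Nat.centralBinom (n + 1) : ℝ) / 4 ^ (n + 1)| ≤ 1 := by
    rw [abs_of_nonneg (by positivity)]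
    exact centralBinom_div_four_pow_le_one _
  have hρ {y : ℝ} (hy : y ∈ Ioo (-1) 1) : HasDerivAt ρ
      (∑' n : ℕ, (Nat.centralBinom (n + 1) : ℝ) / 4 ^ (n + 1) * y ^ n
        - 1 / (√(1 - y) * (1 + √(1 - y)))) y :=
    (hasDerivAt_tsum_div_succ_mul_pow_succ hbound (abs_lt.2 hy)).sub
      (hasDerivAt_two_log_two_sub_two_log_one_add_sqrt_one_sub hy.2)
  have hIcc : Icc 0 x ⊆ Ioo (-1) 1 := Icc_subset_Ioo (by norm_num) hx1
  obtain ⟨-, -, hslope⟩ := exists_hasDerivAt_eq_slope ρ (fun _ => 0) hx0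
    (fun y hy => (hρ (hIcc hy)).continuousAt.continuousWithinAt)
    (fun y hy => by
      simpa [tsum_centralBinom_succ_div_four_pow_mul_pow (abs_lt.2 (hIcc (Ioo_subset_Icc_self hy)))
        hy.1.ne'] using hρ (hIcc (Ioo_subset_Icc_self hy)))
  have hρ0 : ρ 0 = 0 := by norm_num [ρ]
  rw [hρ0, eq_comm, div_eq_zero_iff, sub_zero] at hslope
  simpa [ρ, sub_eq_zero, hx0.ne'] using hslope

theorem central_binom_sum :
    HasSum (fun n : ℕ =>
      (Nat.choose (2 * (n + 1)) (n + 1) : ℝ) / ((n + 1) * 4 ^ (n + 1)))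
      (2 * Real.log 2) := by
  simp_rw [← Nat.centralBinom_eq_two_mul_choose, ← div_div, div_right_comm _ (_ + 1 : ℝ)]
  refine hasSum_of_tendsto_tsum_powerSeries_nhdsLT (fun n => by positivity) (fun x hx => ?_) ?_
  · have hcoeff (n : ℕ) : (Nat.centralBinom (n + 1) : ℝ) / 4 ^ (n + 1) / (n + 1) ≤ 1 :=
      div_le_one_of_le₀ ((centralBinom_div_four_pow_le_one _).trans (by simp)) (by positivity)
    exact (summable_geometric_of_lt_one hx.1.le hx.2).of_nonneg_of_le
      (fun n => mul_nonneg (by positivity) (pow_nonneg hx.1.le n))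
      (fun n => mul_le_of_le_one_left (pow_nonneg hx.1.le n) (hcoeff n))
  · have hlim : Tendsto (fun x => (2 * log 2 - 2 * log (1 + √(1 - x))) / x) (𝓝[<] 1)
        (𝓝 (2 * log 2)) := by
      have hcont : ContinuousAt (fun x => (2 * log 2 - 2 * log (1 + √(1 - x))) / x) 1 := by
        fun_prop (disch := norm_num)
      simpa using hcont.tendsto.mono_left nhdsWithin_le_nhds
    refine hlim.congr' ?_
    filter_upwards [Ioo_mem_nhdsLT zero_lt_one] with x hx
    rw [← tsum_centralBinom_succ_div_four_pow_div_succ_mul_pow_succ hx.1 hx.2, ← tsum_div_const]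
    exact tsum_congr fun n => by rw [pow_succ' x, mul_left_comm, mul_div_cancel_left₀ _ hx.1.ne']
end

section
/- For every integer k ≥ 1 and every real x with 0 ≤ x ≤ 1, ∑_{n=1}^∞ (C(2n,n)/(n^k·4^n))·x^{2n} equals the k-fold iterated integral 2^k·∫_{0<t_k<⋯<t_1<x} (t_k dt_k/(1-t_k²+√(1-t_k²)))·∏_{j=1}^{k-1} (dt_j/t_j); in particular for k=1, ∑_{n=1}^∞ (C(2n,n)/(n·4^n))·x^{2n} = 2·∫_0^x t·dt/(1-t²+√(1-t²)). -/
/-!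
The numbers `bₙ = C(2n,n)/4ⁿ` are the binomial coefficients `multichoose (1/2) n` of
`(1 - u)^(-1/2)`, so `∑_{n ≥ 1} bₙ t^{2n} = t²/(1 - t² + √(1 - t²))`. Dividing a series
`∑ cₙ t^{2n}` by `t` and integrating termwise over `[0, x]` turns `cₙ` into `cₙ/(2n)`, so after
`k` such steps the coefficients are `bₙ/(2n)^k`. Termwise integration up to `x = 1` is justified
because `∑ bₙ/n` converges: `bₙ/(n+1) = 2(bₙ - bₙ₊₁)` telescopes.
-/

/-- `J k x` is the `(k+1)`-fold iterated integral
`∫_{0<t_{k+1}<⋯<t_1<x} (t_{k+1} dt_{k+1}/(1-t_{k+1}²+√(1-t_{k+1}²)))·∏_{j=1}^{k} dt_j/t_j`,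
built from the inside out. -/
noncomputable def J : ℕ → ℝ → ℝ
  | 0, x => ∫ t in (0:ℝ)..x, t / (1 - t ^ 2 + Real.sqrt (1 - t ^ 2))
  | k + 1, x => ∫ t in (0:ℝ)..x, J k t / t

open Finset Set MeasureTheory

noncomputable def scaledCentralBinom (n : ℕ) : ℝ := n.centralBinom / 4 ^ n

lemma scaledCentralBinom_zero : scaledCentralBinom 0 = 1 := by
  simp [scaledCentralBinom]

lemma scaledCentralBinom_pos (n : ℕ) : 0 < scaledCentralBinom n := by
  unfold scaledCentralBinom
  have := n.centralBinom_pos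
  positivity

lemma succ_mul_scaledCentralBinom_succ (n : ℕ) :
    2 * (n + 1) * scaledCentralBinom (n + 1) = (2 * n + 1) * scaledCentralBinom n := by
  have h : ((n + 1 : ℕ) : ℝ) * (n + 1).centralBinom = 2 * (2 * n + 1) * n.centralBinom := by
    exact_mod_cast Nat.succ_mul_centralBinom_succ n
  simp only [scaledCentralBinom, pow_succ]
  push_cast at h
  field_simp
  linear_combination 2 * h

lemma Ring.succ_mul_multichoose_succ {K : Type*} [Field K] [CharZero K]
    (r : K) (n : ℕ) :
    (n + 1) * Ring.multichoose r (n + 1) = (r + n) * Ring.multichoose r n := by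
  have h (m : ℕ) : (m.factorial : K) * Ring.multichoose r m = (ascPochhammer K m).eval r := by
    rw [← nsmul_eq_mul, Ring.factorial_nsmul_multichoose_eq_ascPochhammer,
      Polynomial.ascPochhammer_smeval_eq_eval]
  have hn := h (n + 1)
  rw [ascPochhammer_succ_eval, ← h n, Nat.factorial_succ] at hn
  have : (n.factorial : K) ≠ 0 := by exact_mod_cast n.factorial_ne_zero
  push_cast at hn
  apply mul_left_cancel₀ this
  linear_combination hn

lemma scaledCentralBinom_eq_multichoose (n : ℕ) :
    scaledCentralBinom n = Ring.multichoose (1 / 2 : ℝ) n := by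
  induction n with
  | zero => simp [scaledCentralBinom_zero]
  | succ n ih =>
    have h₁ := succ_mul_scaledCentralBinom_succ n
    have h₂ := Ring.succ_mul_multichoose_succ (1 / 2 : ℝ) n
    rw [ih] at h₁
    have : (n : ℝ) + 1 ≠ 0 := by positivity
    apply mul_left_cancel₀ this
    linear_combination h₁ / 2 - h₂

lemma hasSum_scaledCentralBinom_mul_pow {u : ℝ} (hu : |u| < 1) :
    HasSum (fun n ↦ scaledCentralBinom n * u ^ n) (1 / √(1 - u)) := by
  have h := (Real.one_div_one_sub_rpow_hasFPowerSeriesOnBall_zero (1 / 2)).hasSum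
    (y := u) (by simpa [enorm_eq_nnnorm, ← NNReal.coe_lt_coe] using hu)
  simp only [FormalMultilinearSeries.ofScalars_apply_eq, ← Ring.multichoose_eq,
    ← scaledCentralBinom_eq_multichoose, smul_eq_mul, zero_add] at h
  rwa [Real.sqrt_eq_rpow]

lemma scaledCentralBinom_div_succ (n : ℕ) :
    scaledCentralBinom n / (n + 1) = 2 * (scaledCentralBinom n - scaledCentralBinom (n + 1)) := by
  have := succ_mul_scaledCentralBinom_succ n
  field_simp
  linear_combination this

lemma scaledCentralBinom_succ_div_pow_le (k n : ℕ) :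
    scaledCentralBinom (n + 1) / ((n : ℝ) + 1) ^ (k + 1) ≤
      2 * (scaledCentralBinom n - scaledCentralBinom (n + 1)) := by
  have hpos := scaledCentralBinom_pos (n + 1)
  have hanti : scaledCentralBinom (n + 1) ≤ scaledCentralBinom n := by
    have := scaledCentralBinom_div_succ n
    have := div_pos (scaledCentralBinom_pos n) n.cast_add_one_pos
    linarith
  calc scaledCentralBinom (n + 1) / ((n : ℝ) + 1) ^ (k + 1)
      ≤ scaledCentralBinom (n + 1) / (n + 1) := by
        gcongr
        exact le_self_pow₀ (by simp) (by simp)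
    _ ≤ scaledCentralBinom n / (n + 1) := by gcongr
    _ = _ := scaledCentralBinom_div_succ n

lemma summable_scaledCentralBinom_succ_div_pow (k : ℕ) :
    Summable fun n : ℕ ↦ scaledCentralBinom (n + 1) / ((n : ℝ) + 1) ^ (k + 1) := by
  have hpos (n : ℕ) := scaledCentralBinom_pos (n + 1)
  refine summable_of_sum_range_le (c := 2) (fun n ↦ by have := hpos n; positivity) fun m ↦ ?_
  calc ∑ n ∈ range m, scaledCentralBinom (n + 1) / ((n : ℝ) + 1) ^ (k + 1)
      ≤ ∑ n ∈ range m, 2 * (scaledCentralBinom n - scaledCentralBinom (n + 1)) :=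
        sum_le_sum fun n _ ↦ scaledCentralBinom_succ_div_pow_le k n
    _ = 2 * (1 - scaledCentralBinom m) := by
        rw [← mul_sum, sum_range_sub', scaledCentralBinom_zero]
    _ ≤ 2 := by linarith [scaledCentralBinom_pos m]

lemma integral_Ioc_mul_pow {x : ℝ} (hx : 0 ≤ x) (c : ℝ) (m : ℕ) :
    ∫ t in Ioc 0 x, c * t ^ m = c / (m + 1) * x ^ (m + 1) := by
  rw [← intervalIntegral.integral_of_le hx, intervalIntegral.integral_const_mul, integral_pow]
  field_simp
  simp

lemma hasSum_intervalIntegral_of_hasSum_mul_pow {a : ℕ → ℝ} {e : ℕ → ℕ}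
    {G : ℝ → ℝ}
    (ha : Summable fun n ↦ |a n| / (e n + 1))
    (hG : ∀ t ∈ Ioo (0 : ℝ) 1, HasSum (fun n ↦ a n * t ^ e n) (G t))
    {x : ℝ} (hx : x ∈ Icc (0 : ℝ) 1) :
    HasSum (fun n ↦ a n / (e n + 1) * x ^ (e n + 1)) (∫ t in (0 : ℝ)..x, G t) := by
  have hnorm (n : ℕ) :
      ∫ t in Ioc 0 x, ‖a n * t ^ e n‖ = |a n| / (e n + 1) * x ^ (e n + 1) := by
    rw [← integral_Ioc_mul_pow hx.1]
    refine setIntegral_congr_fun measurableSet_Ioc fun t ht ↦ ?_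
    rw [norm_mul, norm_pow, Real.norm_eq_abs, Real.norm_eq_abs, abs_of_pos ht.1]
  have hsum : Summable fun n ↦ ∫ t in Ioc 0 x, ‖a n * t ^ e n‖ := by
    refine ha.of_nonneg_of_le (fun n ↦ integral_nonneg fun _ ↦ norm_nonneg _) fun n ↦ ?_
    rw [hnorm]
    exact mul_le_of_le_one_right (by positivity) (pow_le_one₀ hx.1 hx.2)
  have key := hasSum_integral_of_summable_integral_norm (F := fun n t ↦ a n * t ^ e n)
    (fun n ↦ (continuous_const.mul (continuous_pow (e n))).integrableOn_Ioc) hsum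
  simp only [integral_Ioc_mul_pow hx.1] at key
  -- `hG` says nothing at the endpoint `t = 1`, a null set
  have hG_ae : ∫ t in Ioc 0 x, G t = ∫ t in Ioc 0 x, ∑' n, a n * t ^ e n := by
    refine integral_congr_ae ?_
    filter_upwards [ae_restrict_mem measurableSet_Ioc,
      ae_restrict_of_ae (volume.ae_ne 1)] with t ht ht1
    exact (hG t ⟨ht.1, lt_of_le_of_ne (ht.2.trans hx.2) ht1⟩).tsum_eq.symm
  rwa [intervalIntegral.integral_of_le hx.1, hG_ae]

lemma one_div_sqrt_one_sub_sub_one {u : ℝ} (hu : u < 1) :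
    1 / √(1 - u) - 1 = u / (1 - u + √(1 - u)) := by
  have hs : 0 < √(1 - u) := Real.sqrt_pos.2 (by linarith)
  have hsq : √(1 - u) ^ 2 = 1 - u := Real.sq_sqrt (by linarith)
  rw [div_sub_one hs.ne', div_eq_div_iff hs.ne' (by positivity)]
  linear_combination -hsq

lemma hasSum_scaledCentralBinom_succ_mul_pow_two_mul {t : ℝ} (ht : |t| < 1) :
    HasSum (fun n ↦ scaledCentralBinom (n + 1) * t ^ (2 * (n + 1)))
      (t ^ 2 / (1 - t ^ 2 + √(1 - t ^ 2))) := by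
  have ht2 : |t ^ 2| < 1 := by rw [abs_pow]; exact pow_lt_one₀ (abs_nonneg t) ht two_ne_zero
  have h := (hasSum_nat_add_iff' 1).2 (hasSum_scaledCentralBinom_mul_pow ht2)
  rw [← one_div_sqrt_one_sub_sub_one (abs_lt.1 ht2).2]
  simpa [scaledCentralBinom_zero, pow_mul] using h

lemma hasSum_two_mul_integral_div {c : ℕ → ℝ} {F : ℝ → ℝ}
    (hc : Summable fun n ↦ |c n| / ((n : ℝ) + 1))
    (hF : ∀ t ∈ Ioo (0 : ℝ) 1, HasSum (fun n ↦ c n * t ^ (2 * (n + 1))) (F t))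
    {x : ℝ} (hx : x ∈ Icc (0 : ℝ) 1) :
    HasSum (fun n ↦ c n / ((n : ℝ) + 1) * x ^ (2 * (n + 1)))
      (2 * ∫ t in (0 : ℝ)..x, F t / t) := by
  have hodd : ∀ t ∈ Ioo (0 : ℝ) 1, HasSum (fun n ↦ c n * t ^ (2 * n + 1)) (F t / t) := by
    intro t ht
    have hterm (n : ℕ) : c n * t ^ (2 * (n + 1)) / t = c n * t ^ (2 * n + 1) := by
      rw [mul_div_assoc, show 2 * (n + 1) = 2 * n + 1 + 1 by ring, pow_succ,
        mul_div_cancel_right₀ _ ht.1.ne']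
    simpa only [hterm] using (hF t ht).div_const t
  have hc' : Summable fun n ↦ |c n| / (((2 * n + 1 : ℕ) : ℝ) + 1) :=
    (hc.div_const 2).congr fun n ↦ by push_cast; field_simp; ring
  have hterm (n : ℕ) : 2 * (c n / (((2 * n + 1 : ℕ) : ℝ) + 1) * x ^ (2 * n + 1 + 1)) =
      c n / ((n : ℝ) + 1) * x ^ (2 * (n + 1)) := by
    push_cast
    field_simp
    ring_nf
  simpa only [hterm] using (hasSum_intervalIntegral_of_hasSum_mul_pow hc' hodd hx).mul_left 2

lemma hasSum_scaledCentralBinom_succ_div_pow_mul_pow (k : ℕ) {x : ℝ}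
    (hx : x ∈ Icc (0 : ℝ) 1) :
    HasSum (fun n ↦ scaledCentralBinom (n + 1) / ((n : ℝ) + 1) ^ (k + 1) * x ^ (2 * (n + 1)))
      (2 ^ (k + 1) * J k x) := by
  induction k generalizing x with
  | zero =>
    have hc : Summable fun n ↦ |scaledCentralBinom (n + 1)| / ((n : ℝ) + 1) := by
      simpa [abs_of_pos (scaledCentralBinom_pos _)] using
        summable_scaledCentralBinom_succ_div_pow 0
    have h := hasSum_two_mul_integral_div hc (fun t ht ↦
      hasSum_scaledCentralBinom_succ_mul_pow_two_mul (abs_lt.2 ⟨by linarith [ht.1], ht.2⟩)) hx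
    -- at `t = 0` both sides are `0`, the left one through `0 / 0 = 0`
    have hF (t : ℝ) :
        t ^ 2 / (1 - t ^ 2 + √(1 - t ^ 2)) / t = t / (1 - t ^ 2 + √(1 - t ^ 2)) := by
      rcases eq_or_ne t 0 with rfl | ht
      · simp
      · field_simp
    simpa [hF, J] using h
  | succ k ih =>
    have hc : Summable fun n ↦
        |scaledCentralBinom (n + 1) / ((n : ℝ) + 1) ^ (k + 1)| / ((n : ℝ) + 1) := by
      refine (summable_scaledCentralBinom_succ_div_pow (k + 1)).congr fun n ↦ ?_
      rw [abs_of_pos (by have := scaledCentralBinom_pos (n + 1); positivity), div_div, ← pow_succ]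
    have h := hasSum_two_mul_integral_div hc (fun t ht ↦ ih ⟨ht.1.le, ht.2.le⟩) hx
    simp only [mul_div_assoc, intervalIntegral.integral_const_mul, div_div, ← pow_succ] at h
    rwa [J, pow_succ 2 (k + 1), mul_comm _ 2, mul_assoc]

theorem central_binom_iterated_integral (k : ℕ) (hk : 1 ≤ k) (x : ℝ)
    (hx : x ∈ Set.Icc (0:ℝ) 1) :
    HasSum (fun n : ℕ =>
      ((Nat.choose (2 * (n + 1)) (n + 1) : ℝ) / (((n : ℝ) + 1) ^ k * 4 ^ (n + 1))) *
        x ^ (2 * (n + 1)))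
      (2 ^ k * J (k - 1) x)
    ∧ HasSum (fun n : ℕ =>
      ((Nat.choose (2 * (n + 1)) (n + 1) : ℝ) / (((n : ℝ) + 1) * 4 ^ (n + 1))) *
        x ^ (2 * (n + 1)))
      (2 * ∫ t in (0:ℝ)..x, t / (1 - t ^ 2 + Real.sqrt (1 - t ^ 2))) := by
  have hterm (n : ℕ) (d : ℝ) : (Nat.choose (2 * (n + 1)) (n + 1) : ℝ) / (d * 4 ^ (n + 1)) =
      scaledCentralBinom (n + 1) / d := by
    rw [scaledCentralBinom, Nat.centralBinom, div_div, mul_comm ((4 : ℝ) ^ (n + 1))]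
  obtain ⟨k, rfl⟩ : ∃ j, k = j + 1 := ⟨k - 1, by omega⟩
  constructor
  · simpa only [hterm, Nat.add_sub_cancel] using
      hasSum_scaledCentralBinom_succ_div_pow_mul_pow k hx
  · simpa only [hterm, zero_add, pow_one, J] using
      hasSum_scaledCentralBinom_succ_div_pow_mul_pow 0 hx
end
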